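/- Assume quasi-symmetry. Let ξ be a nonzero linear functional on ℝ^k, F = F_ξ = {x∈∇ : ξ(x) = max_{y∈∇} ξ(y)} the face of ∇ exposed by ξ, C_F = {t(x−y) : t ≥ 0, x ∈ ∇, y ∈ F} the tangent cone of ∇ along F, and I_F = {i : β_i ∉ C_F}. Then I_F = {i : ξ(β_i) > 0}, and ∑_{i∈I_F} [0,−β_i] + ∑_{i∉I_F} ℝ_{≥0}β_i = C_F, where ℝ_{≥0}β_i = {tβ_i : t ≥ 0} and the sums are Minkowski sums. -/

import Mathlib

/-!
Write the points of `∇` as `½ ∑ tᵢ βᵢ` with `t ∈ [0,1]ᴺ`. Then `ξ` is maximal exactly when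
`tᵢ ξ(βᵢ) = ξ(βᵢ)⁺` for all `i`, so that differences `x − z` with `x ∈ ∇`, `z ∈ F` are the
combinations `∑ cᵢ βᵢ` with `cᵢ ξ(βᵢ) ≤ 0`, which is therefore the tangent cone `C_F`. In
particular `ξ ≤ 0` on `C_F`, and `βᵢ ∈ C_F` iff `ξ(βᵢ) ≤ 0`.
Quasi-symmetry gives each `βᵢ` a negative multiple `βⱼ = γ βᵢ`, so a term `cᵢ βᵢ` with `cᵢ < 0`
equals `(cᵢ / γ) βⱼ` with `cᵢ / γ > 0` and `ξ(βⱼ) ≤ 0`. Hence `C_F` is already the cone spanned by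
the `βᵢ` with `ξ(βᵢ) ≤ 0`, which lies inside the Minkowski sum in question, itself inside `C_F`.
-/

open Pointwise
open scoped Classical

noncomputable section

/-- The zonotope `∇ = (1/2)∑_i [0, β_i]`. -/
def nabla {N k : ℕ} (β : Fin N → (Fin k → ℝ)) : Set (Fin k → ℝ) :=
  (2⁻¹ : ℝ) • ∑ i : Fin N, segment ℝ 0 (β i)

/-- The face `F_ξ` of `∇` exposed by the linear functional `ξ`. -/
def exposedFace {N k : ℕ} (β : Fin N → (Fin k → ℝ))
    (ξ : (Fin k → ℝ) →ₗ[ℝ] ℝ) : Set (Fin k → ℝ) :=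
  {x ∈ nabla β | ∀ y ∈ nabla β, ξ y ≤ ξ x}

/-- The tangent cone `C_F = {t(x − y) : t ≥ 0, x ∈ ∇, y ∈ F}` of `∇` along the
face `F = F_ξ`. -/
def tangentConeFace {N k : ℕ} (β : Fin N → (Fin k → ℝ))
    (ξ : (Fin k → ℝ) →ₗ[ℝ] ℝ) : Set (Fin k → ℝ) :=
  {y | ∃ t : ℝ, 0 ≤ t ∧ ∃ x ∈ nabla β, ∃ z ∈ exposedFace β ξ, y = t • (x - z)}

section LinearCombination

variable {ι V : Type*} [Fintype ι] [AddCommGroup V] [Module ℝ V]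

lemma sum_image_smul_eq_image_pi (A : ι → Set ℝ) (v : ι → V) :
    ∑ i, (· • v i) '' A i = Fintype.linearCombination ℝ v '' Set.univ.pi A := by
  ext x
  simp only [Set.mem_fintype_sum, Set.mem_image, Set.mem_univ_pi,
    Fintype.linearCombination_apply]
  constructor
  · rintro ⟨g, hg, rfl⟩
    choose c hc hcg using hg
    exact ⟨c, hc, Finset.sum_congr rfl fun i _ => hcg i⟩
  · rintro ⟨c, hc, rfl⟩
    exact ⟨fun i => c i • v i, fun i => ⟨c i, hc i, rfl⟩, rfl⟩

lemma segment_zero_eq_image (v : V) :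
    segment ℝ 0 v = (fun t : ℝ => t • v) '' Set.Icc 0 1 := by
  simp [segment_eq_image]

lemma segment_zero_neg_eq_image (v : V) :
    segment ℝ 0 (-v) = (fun t : ℝ => t • v) '' Set.Icc (-1) 0 := by
  rw [segment_zero_eq_image, ← neg_zero, ← Set.image_neg_Icc, Set.image_image]
  simp only [neg_smul, smul_neg, neg_zero]

lemma ray_eq_image (v : V) :
    {y | ∃ t : ℝ, 0 ≤ t ∧ y = t • v} = (fun t : ℝ => t • v) '' Set.Ici 0 := by
  ext y
  simp [eq_comm]

lemma map_linearCombination (ξ : V →ₗ[ℝ] ℝ) (β : ι → V) (t : ι → ℝ) :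
    ξ (Fintype.linearCombination ℝ β t) = ∑ i, t i * ξ (β i) := by
  simp [Fintype.linearCombination_apply]

def IsQuasiSymmetric (β : ι → V) : Prop :=
  ∀ L : Submodule ℝ V, Module.finrank ℝ L = 1 →
    ∑ i ∈ Finset.univ.filter (fun i => β i ∈ L), β i = 0

lemma IsQuasiSymmetric.exists_neg_smul {β : ι → V} (hβ : IsQuasiSymmetric β) {i : ι}
    (hi : β i ≠ 0) : ∃ j, ∃ γ : ℝ, γ < 0 ∧ β j = γ • β i := by
  by_contra! hneg
  set S := Finset.univ.filter (fun j => β j ∈ ℝ ∙ β i)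
  have hline : ∀ j ∈ S, ∃ γ : ℝ, γ • β i = β j := fun j hj =>
    Submodule.mem_span_singleton.1 (Finset.mem_filter.1 hj).2
  choose! γ hγ using hline
  have hγ_nonneg : ∀ j ∈ S, 0 ≤ γ j := fun j hj =>
    not_lt.1 fun hlt => hneg j (γ j) hlt (hγ j hj).symm
  have hiS : i ∈ S :=
    Finset.mem_filter.2 ⟨Finset.mem_univ i, Submodule.mem_span_singleton_self _⟩
  have hγi : 0 < γ i :=
    (hγ_nonneg i hiS).lt_of_ne fun h0 => hi (by rw [← hγ i hiS, ← h0, zero_smul])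
  have hsum : (∑ j ∈ S, γ j) • β i = 0 := by
    rw [Finset.sum_smul, Finset.sum_congr rfl hγ]
    exact hβ _ (finrank_span_singleton hi)
  exact smul_ne_zero (Finset.sum_pos' hγ_nonneg ⟨i, hiS, hγi⟩).ne' hi hsum

lemma IsQuasiSymmetric.exists_nonneg_coeff_eq_smul {β : ι → V} (hβ : IsQuasiSymmetric β)
    (ξ : V →ₗ[ℝ] ℝ) {i : ι} (hβi : β i ≠ 0) {c : ℝ} (hc : c * ξ (β i) ≤ 0) :
    ∃ d : ι → ℝ, (0 ≤ d ∧ ∀ j, d j * ξ (β j) ≤ 0) ∧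
      Fintype.linearCombination ℝ β d = c • β i := by
  have single_mem {j : ι} {r : ℝ} (hr : 0 ≤ r) (hrj : r * ξ (β j) ≤ 0) :
      0 ≤ (Pi.single j r : ι → ℝ) ∧ ∀ l, (Pi.single j r : ι → ℝ) l * ξ (β l) ≤ 0 := by
    refine ⟨Pi.single_nonneg.2 hr, fun l => ?_⟩
    rcases eq_or_ne l j with rfl | hl
    · simpa using hrj
    · simp [hl]
  rcases le_or_gt 0 c with hc0 | hc0
  · exact ⟨_, single_mem hc0 hc, Fintype.linearCombination_apply_single ..⟩
  obtain ⟨j, γ, hγ, hj⟩ := hβ.exists_neg_smul hβi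
  refine ⟨Pi.single j (c / γ), single_mem (div_nonneg_of_nonpos hc0.le hγ.le) ?_, ?_⟩
  · rwa [hj, map_smul, smul_eq_mul, ← mul_assoc, div_mul_cancel₀ _ hγ.ne]
  · rw [Fintype.linearCombination_apply_single, hj, smul_smul, div_mul_cancel₀ _ hγ.ne]

lemma IsQuasiSymmetric.exists_nonneg_coeff_eq {β : ι → V} (hβ : IsQuasiSymmetric β)
    (hβ0 : ∀ i, β i ≠ 0) (ξ : V →ₗ[ℝ] ℝ) {c : ι → ℝ} (hc : ∀ i, c i * ξ (β i) ≤ 0) :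
    ∃ d : ι → ℝ, (0 ≤ d ∧ ∀ j, d j * ξ (β j) ≤ 0) ∧
      Fintype.linearCombination ℝ β d = Fintype.linearCombination ℝ β c := by
  choose d hd hdc using fun i => hβ.exists_nonneg_coeff_eq_smul ξ (hβ0 i) (hc i)
  refine ⟨∑ i, d i, ⟨Finset.sum_nonneg fun i _ => (hd i).1, fun j => ?_⟩, ?_⟩
  · rw [Finset.sum_apply, Finset.sum_mul]
    exact Finset.sum_nonpos fun i _ => (hd i).2 j
  · rw [map_sum, Finset.sum_congr rfl fun i _ => hdc i, Fintype.linearCombination_apply]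

end LinearCombination

lemma mul_le_posPart {t a : ℝ} (ht : t ∈ Set.Icc (0 : ℝ) 1) : t * a ≤ a⁺ := by
  nlinarith [le_posPart a, posPart_nonneg a, ht.1, ht.2]

lemma exists_mul_eq_posPart_of_mul_nonpos {a c ε : ℝ} (hca : c * a ≤ 0) (hε : 0 ≤ ε)
    (hεc : ε * |c| ≤ 1) :
    ∃ u ∈ Set.Icc (0 : ℝ) 1, u * a = a⁺ ∧ u + ε * c ∈ Set.Icc (0 : ℝ) 1 := by
  have hbound := abs_le.1 (show |ε * c| ≤ 1 by rwa [abs_mul, abs_of_nonneg hε])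
  rcases lt_or_ge 0 a with ha | ha
  · have hc : c ≤ 0 := nonpos_of_mul_nonpos_left hca ha
    refine ⟨1, by simp, by rw [one_mul, posPart_eq_self.2 ha.le], ?_, ?_⟩ <;>
      nlinarith
  rcases lt_or_ge c 0 with hc | hc
  · have ha0 : a = 0 := le_antisymm ha (nonneg_of_mul_nonpos_right hca hc)
    refine ⟨1, by simp, by simp [ha0], ?_, ?_⟩ <;> nlinarith
  · refine ⟨0, by simp, by rw [zero_mul, posPart_eq_zero.2 ha], ?_, ?_⟩ <;> nlinarith

lemma exists_pos_mul_abs_le_one {ι : Type*} [Fintype ι] (c : ι → ℝ) :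
    ∃ ε > 0, ∀ i, ε * |c i| ≤ 1 := by
  refine ⟨(1 + ‖c‖)⁻¹, by positivity, fun i => ?_⟩
  rw [inv_mul_le_iff₀ (by positivity), mul_one, ← Real.norm_eq_abs]
  linarith [norm_le_pi_norm c i]

section Zonotope

variable {N k : ℕ} {β : Fin N → (Fin k → ℝ)} {ξ : (Fin k → ℝ) →ₗ[ℝ] ℝ}

local notation "lc" => Fintype.linearCombination ℝ β

lemma nabla_eq_image : nabla β = (2⁻¹ : ℝ) • lc '' Set.Icc 0 1 := by
  simp_rw [nabla, segment_zero_eq_image, sum_image_smul_eq_image_pi, Set.pi_univ_Icc]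
  rfl

lemma mem_nabla {x : Fin k → ℝ} : x ∈ nabla β ↔ ∃ t ∈ Set.Icc 0 1, (2⁻¹ : ℝ) • lc t = x := by
  simp [nabla_eq_image, Set.mem_smul_set]

lemma map_le_of_mem_nabla {x : Fin k → ℝ} (hx : x ∈ nabla β) :
    ξ x ≤ 2⁻¹ * ∑ i, (ξ (β i))⁺ := by
  obtain ⟨t, ht, rfl⟩ := mem_nabla.1 hx
  rw [map_smul, map_linearCombination ξ β, smul_eq_mul]
  gcongr with i
  exact mul_le_posPart ⟨ht.1 i, ht.2 i⟩

lemma half_linearCombination_mem_exposedFace_iff {u : Fin N → ℝ} (hu : u ∈ Set.Icc 0 1) :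
    (2⁻¹ : ℝ) • lc u ∈ exposedFace β ξ ↔ ∀ i, u i * ξ (β i) = (ξ (β i))⁺ := by
  have hvalue : ∀ t, ξ ((2⁻¹ : ℝ) • lc t) = 2⁻¹ * ∑ i, t i * ξ (β i) := fun t => by
    rw [map_smul, map_linearCombination ξ β, smul_eq_mul]
  have hle : ∀ i ∈ Finset.univ, u i * ξ (β i) ≤ (ξ (β i))⁺ := fun i _ =>
    mul_le_posPart ⟨hu.1 i, hu.2 i⟩
  have hsum : ∑ i, u i * ξ (β i) = ∑ i, (ξ (β i))⁺ ↔ ∀ i, u i * ξ (β i) = (ξ (β i))⁺ := by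
    simpa using Finset.sum_eq_sum_iff_of_le hle
  rw [← hsum]
  constructor
  · rintro ⟨-, hmax⟩
    set v : Fin N → ℝ := fun i => if 0 < ξ (β i) then 1 else 0
    have hv : v ∈ Set.Icc 0 1 := ⟨fun i => by dsimp [v]; split_ifs <;> norm_num,
      fun i => by dsimp [v]; split_ifs <;> norm_num⟩
    have hvmax : ∑ i, v i * ξ (β i) = ∑ i, (ξ (β i))⁺ := Finset.sum_congr rfl fun i _ => by
      dsimp [v]; split_ifs with h
      · rw [one_mul, posPart_eq_self.2 h.le]
      · rw [zero_mul, posPart_eq_zero.2 (not_lt.1 h)]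
    have := hmax _ (mem_nabla.2 ⟨v, hv, rfl⟩)
    rw [hvalue, hvalue, hvmax] at this
    exact le_antisymm (Finset.sum_le_sum hle) (by linarith)
  · intro h
    refine ⟨mem_nabla.2 ⟨u, hu, rfl⟩, fun y hy => (map_le_of_mem_nabla hy).trans_eq ?_⟩
    rw [hvalue, h]

lemma tangentConeFace_eq_image :
    tangentConeFace β ξ = lc '' {c | ∀ i, c i * ξ (β i) ≤ 0} := by
  apply Set.Subset.antisymm
  · rintro _ ⟨t, ht, x, hx, z, hz, rfl⟩
    obtain ⟨s, hs, rfl⟩ := mem_nabla.1 hx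
    obtain ⟨u, hu, rfl⟩ := mem_nabla.1 hz.1
    have hface := (half_linearCombination_mem_exposedFace_iff hu).1 hz
    refine ⟨(t / 2) • (s - u), fun i => ?_, by rw [map_smul, map_sub]; module⟩
    calc (t / 2) • (s - u) i * ξ (β i) = t / 2 * (s i * ξ (β i) - u i * ξ (β i)) := by
          simp only [Pi.sub_apply, smul_eq_mul]; ring
      _ ≤ 0 := mul_nonpos_of_nonneg_of_nonpos (by positivity)
          (by rw [hface, sub_nonpos]; exact mul_le_posPart ⟨hs.1 i, hs.2 i⟩)
  · rintro _ ⟨c, hc, rfl⟩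
    obtain ⟨ε, hε, hεc⟩ := exists_pos_mul_abs_le_one c
    choose u hu hface hs using fun i => exists_mul_eq_posPart_of_mul_nonpos (hc i) hε.le (hεc i)
    refine ⟨2 / ε, by positivity, (2⁻¹ : ℝ) • lc (u + ε • c),
      mem_nabla.2 ⟨_, ⟨fun i => (hs i).1, fun i => (hs i).2⟩, rfl⟩, (2⁻¹ : ℝ) • lc u,
      (half_linearCombination_mem_exposedFace_iff ⟨fun i => (hu i).1, fun i => (hu i).2⟩).2 hface,
      ?_⟩
    rw [map_add, map_smul]
    match_scalars
    · field_simp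
    · ring

lemma map_nonpos_of_mem_tangentConeFace {y : Fin k → ℝ} (hy : y ∈ tangentConeFace β ξ) :
    ξ y ≤ 0 := by
  rw [tangentConeFace_eq_image] at hy
  obtain ⟨c, hc, rfl⟩ := hy
  rw [map_linearCombination ξ β]
  exact Finset.sum_nonpos fun i _ => hc i

lemma notMem_tangentConeFace_iff (i : Fin N) :
    β i ∉ tangentConeFace β ξ ↔ 0 < ξ (β i) := by
  refine ⟨fun h => not_le.1 fun hi => h ?_,
    fun hi h => (map_nonpos_of_mem_tangentConeFace h).not_gt hi⟩
  rw [tangentConeFace_eq_image]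
  refine ⟨Pi.single i 1, fun j => ?_, by rw [Fintype.linearCombination_apply_single, one_smul]⟩
  rcases eq_or_ne j i with rfl | hj
  · simpa using hi
  · simp [hj]

lemma IsQuasiSymmetric.sum_segment_neg_add_sum_ray_eq (hβ : IsQuasiSymmetric β)
    (hβ0 : ∀ i, β i ≠ 0) :
    (∑ i, if 0 < ξ (β i) then segment ℝ 0 (-(β i)) else {y | ∃ t : ℝ, 0 ≤ t ∧ y = t • β i}) =
      tangentConeFace β ξ := by
  have hterm : ∀ i, (if 0 < ξ (β i) then segment ℝ 0 (-(β i))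
      else {y | ∃ t : ℝ, 0 ≤ t ∧ y = t • β i}) =
      (fun t : ℝ => t • β i) '' (if 0 < ξ (β i) then Set.Icc (-1) 0 else Set.Ici 0) := by
    intro i
    split_ifs
    exacts [segment_zero_neg_eq_image _, ray_eq_image _]
  rw [Finset.sum_congr rfl fun i _ => hterm i, sum_image_smul_eq_image_pi,
    tangentConeFace_eq_image]
  apply Set.Subset.antisymm
  · refine Set.image_mono fun c hc i => ?_
    have hci : c i ∈ if 0 < ξ (β i) then Set.Icc (-1) 0 else Set.Ici 0 := hc i (Set.mem_univ i)
    split_ifs at hci with hi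
    · exact mul_nonpos_of_nonpos_of_nonneg hci.2 hi.le
    · exact mul_nonpos_of_nonneg_of_nonpos hci (not_lt.1 hi)
  · rintro _ ⟨c, hc, rfl⟩
    obtain ⟨d, ⟨hd0, hd⟩, hdc⟩ := hβ.exists_nonneg_coeff_eq hβ0 ξ hc
    refine ⟨d, fun j _ => ?_, hdc⟩
    dsimp only
    split_ifs with hj
    · have : d j = 0 := le_antisymm (nonpos_of_mul_nonpos_left (hd j) hj) (hd0 j)
      simp [this]
    · exact hd0 j

end Zonotope

theorem tangent_cone_of_face_decomposition_general
    {N k : ℕ}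
    (β : Fin N → (Fin k → ℝ))
    (hβ0 : ∀ i, β i ≠ 0)
    (hqs : ∀ L : Submodule ℝ (Fin k → ℝ), Module.finrank ℝ L = 1 →
      ∑ i ∈ Finset.univ.filter (fun i => β i ∈ L), β i = 0)
    (ξ : (Fin k → ℝ) →ₗ[ℝ] ℝ) :
    {i | β i ∉ tangentConeFace β ξ} = {i | 0 < ξ (β i)} ∧
    (∑ i : Fin N,
        (if β i ∉ tangentConeFace β ξ then segment ℝ 0 (-(β i))
          else {y | ∃ t : ℝ, 0 ≤ t ∧ y = t • β i})) =
      tangentConeFace β ξ := by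
  have hI : ∀ i, β i ∉ tangentConeFace β ξ ↔ 0 < ξ (β i) := notMem_tangentConeFace_iff
  refine ⟨Set.ext hI, ?_⟩
  rw [Finset.sum_congr rfl fun i _ => if_congr (hI i) rfl rfl]
  exact IsQuasiSymmetric.sum_segment_neg_add_sum_ray_eq hqs hβ0

/-- **Lemma.** Under quasi-symmetry, for a nonzero functional `ξ` with exposed
face `F = F_ξ`, tangent cone `C_F` and `I_F = {i : β_i ∉ C_F}`, one has
`I_F = {i : ξ(β_i) > 0}` and
`∑_{i ∈ I_F} [0, −β_i] + ∑_{i ∉ I_F} ℝ_{≥0}β_i = C_F`. -/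
theorem tangent_cone_of_face_decomposition
    {N k : ℕ} (hk : 1 ≤ k) (hNk : k ≤ N)
    (μ : (Fin N → ℝ) →ₗ[ℝ] (Fin k → ℝ))
    (hsurj : Function.Surjective μ)
    (β : Fin N → (Fin k → ℝ)) (hβ : ∀ i, β i = μ (Pi.single i 1))
    (hβ0 : ∀ i, β i ≠ 0)
    (hspan : Submodule.span ℝ (Set.range β) = ⊤)
    (hqs : ∀ L : Submodule ℝ (Fin k → ℝ), Module.finrank ℝ L = 1 →
      ∑ i ∈ Finset.univ.filter (fun i => β i ∈ L), β i = 0)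
    (ξ : (Fin k → ℝ) →ₗ[ℝ] ℝ) (hξ : ξ ≠ 0) :
    {i | β i ∉ tangentConeFace β ξ} = {i | 0 < ξ (β i)} ∧
    (∑ i : Fin N,
        (if β i ∉ tangentConeFace β ξ then segment ℝ 0 (-(β i))
          else {y | ∃ t : ℝ, 0 ≤ t ∧ y = t • β i})) =
      tangentConeFace β ξ :=
  tangent_cone_of_face_decomposition_general β hβ0 hqs ξ
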